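/- arXiv:1907.02378 — 2 statements merged into one kernel-verified Lean document; each statement's English description precedes it below -/
import Mathlib

section
/- Let φ ∈ 𝒪ₙ with φ(0) = 0 and μ(φ) < ∞ define the isolated hypersurface singularity (X,0) = (φ⁻¹(0),0), and let f ∈ 𝒪ₙ. Then μ_BR(f,X) = dim_ℂ 𝒪ₙ/df(Θ_X) is finite if and only if dim_ℂ 𝒪ₙ/df(Θ_X^T) is finite, where df(Θ_X^T) = ⟨φ∂f/∂x₁,…,φ∂f/∂xₙ⟩ + J(f,φ). -/
set_option maxHeartbeats 1000000
set_option synthInstance.maxHeartbeats 400000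

open Filter Topology Module

noncomputable section

namespace BR

variable {α : Type*} (l : Filter α)

instance germAlgebra : Algebra ℂ ((l : Filter α).Germ ℂ) :=
  Algebra.ofModule
    (fun r x y => Filter.Germ.inductionOn₂ x y fun f g => by
      rw [← Filter.Germ.coe_smul, ← Filter.Germ.coe_mul, ← Filter.Germ.coe_mul,
        ← Filter.Germ.coe_smul, smul_mul_assoc])
    (fun r x y => Filter.Germ.inductionOn₂ x y fun f g => by
      rw [← Filter.Germ.coe_smul, ← Filter.Germ.coe_mul, ← Filter.Germ.coe_mul,
        ← Filter.Germ.coe_smul, mul_smul_comm])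

/-- A germ at `0` is holomorphic if it has a representative which is analytic at `0`. -/
def IsHolGerm (n : ℕ) (g : (𝓝 (0 : Fin n → ℂ)).Germ ℂ) : Prop :=
  ∃ f : (Fin n → ℂ) → ℂ, AnalyticAt ℂ f 0 ∧ (↑f : (𝓝 (0 : Fin n → ℂ)).Germ ℂ) = g

/-- `𝒪ₙ`, the local ring of germs at `0` of holomorphic functions `(ℂⁿ,0) → ℂ`,
realized as the subalgebra of all germs at `0` of `ℂ`-valued functions consisting of
those germs admitting an analytic representative. -/
def Osub (n : ℕ) : Subalgebra ℂ ((𝓝 (0 : Fin n → ℂ)).Germ ℂ) where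
  carrier := {g | IsHolGerm n g}
  add_mem' := by
    rintro a b ⟨f, hf, rfl⟩ ⟨g, hg, rfl⟩
    exact ⟨f + g, hf.add hg, (Filter.Germ.coe_add _ _)⟩
  mul_mem' := by
    rintro a b ⟨f, hf, rfl⟩ ⟨g, hg, rfl⟩
    exact ⟨f * g, hf.mul hg, (Filter.Germ.coe_mul _ _)⟩
  algebraMap_mem' := fun c => ⟨fun _ => c, analyticAt_const, by
    rw [Algebra.algebraMap_eq_smul_one, ← Filter.Germ.coe_one, ← Filter.Germ.coe_smul]
    congr 1; funext x; simp⟩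

/-- The ring `𝒪ₙ` of holomorphic germs `(ℂⁿ,0) → ℂ`. -/
def O (n : ℕ) : Type := ↥(Osub n)

instance (n : ℕ) : CommRing (O n) := inferInstanceAs (CommRing ↥(Osub n))
instance (n : ℕ) : Algebra ℂ (O n) := inferInstanceAs (Algebra ℂ ↥(Osub n))

variable {n : ℕ}

/-- The germ underlying an element of `𝒪ₙ`. -/
def toGerm (g : O n) : (𝓝 (0 : Fin n → ℂ)).Germ ℂ := (show ↥(Osub n) from g).1

lemma isHolGerm (g : O n) : IsHolGerm n (toGerm g) := (show ↥(Osub n) from g).2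

/-- The element of `𝒪ₙ` determined by a function analytic at `0`. -/
def mk (f : (Fin n → ℂ) → ℂ) (hf : AnalyticAt ℂ f 0) : O n :=
  show ↥(Osub n) from ⟨(↑f : (𝓝 (0 : Fin n → ℂ)).Germ ℂ), f, hf, rfl⟩

lemma toGerm_mk (f : (Fin n → ℂ) → ℂ) (hf : AnalyticAt ℂ f 0) :
    toGerm (mk f hf) = (↑f : (𝓝 (0 : Fin n → ℂ)).Germ ℂ) := rfl

/-- A chosen analytic representative of a holomorphic germ. -/
def rep (g : O n) : (Fin n → ℂ) → ℂ := (isHolGerm g).choose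

lemma rep_analyticAt (g : O n) : AnalyticAt ℂ (rep g) 0 := (isHolGerm g).choose_spec.1

lemma rep_spec (g : O n) : (↑(rep g) : (𝓝 (0 : Fin n → ℂ)).Germ ℂ) = toGerm g :=
  (isHolGerm g).choose_spec.2

/-- The value at the origin of a holomorphic germ. -/
def value (g : O n) : ℂ :=
  Filter.Germ.liftOn (toGerm g) (fun f => f 0) fun _ _ h => h.eq_of_nhds

/-- The partial derivative `∂g/∂xᵢ` of a holomorphic germ `g ∈ 𝒪ₙ`. -/
def pd (i : Fin n) (g : O n) : O n :=
  mk (fun x => fderiv ℂ (rep g) x (Pi.single i 1))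
    (by
      have h1 : AnalyticAt ℂ (fderiv ℂ (rep g)) 0 := (rep_analyticAt g).fderiv
      exact ((ContinuousLinearMap.apply ℂ ℂ (Pi.single i 1)).analyticAt _).comp h1)

/-- The evaluation `ξ ↦ df(ξ) = ∑ᵢ ξᵢ ∂f/∂xᵢ` of the differential of `f`
on vector fields, as an `𝒪ₙ`-linear map. -/
def evalD (f : O n) : (Fin n → O n) →ₗ[O n] O n where
  toFun ξ := ∑ i, ξ i * pd i f
  map_add' ξ η := by simp [add_mul, Finset.sum_add_distrib]
  map_smul' c ξ := by simp [Finset.mul_sum, mul_assoc]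

/-- The Jacobian ideal `Jh = ⟨∂h/∂x₁, …, ∂h/∂xₙ⟩` of `h ∈ 𝒪ₙ`. -/
def J (h : O n) : Ideal (O n) := Ideal.span (Set.range fun i => pd i h)

/-- The Milnor number `μ(h) = dim_ℂ 𝒪ₙ/Jh`. -/
def milnor (h : O n) : ℕ := finrank ℂ (O n ⧸ J h)

/-- The ideal `J(f,φ)` generated by the `2×2` minors of the Jacobian matrix of `(f,φ)`. -/
def Jpair (f φ : O n) : Ideal (O n) :=
  Ideal.span {h | ∃ i j, h = pd i f * pd j φ - pd j f * pd i φ}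

/-- `Θ_X`: the `𝒪ₙ`-module of vector fields tangent to `X = φ⁻¹(0)`, i.e. those
`ξ ∈ 𝒪ₙⁿ` with `∑ᵢ ξᵢ ∂φ/∂xᵢ ∈ ⟨φ⟩`. -/
def ThetaX (φ : O n) : Submodule (O n) (Fin n → O n) :=
  Submodule.comap (evalD φ) (Ideal.span {φ})

/-- `Θ_X^T`: the submodule of `Θ_X` generated by the trivial vector fields
`φ ∂/∂xᵢ` and `(∂φ/∂xⱼ) ∂/∂xₖ − (∂φ/∂xₖ) ∂/∂xⱼ` (`j ≠ k`). -/
def ThetaXT (φ : O n) : Submodule (O n) (Fin n → O n) :=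
  Submodule.span (O n)
    ({v : Fin n → O n | ∃ i : Fin n, v = Pi.single i φ} ∪
      {v : Fin n → O n | ∃ j k : Fin n, j ≠ k ∧
        v = Pi.single k (pd j φ) - Pi.single j (pd k φ)})

/-- The ideal `df(Θ_X) = {df(ξ) : ξ ∈ Θ_X}`. -/
def dTheta (f φ : O n) : Ideal (O n) := Submodule.map (evalD f) (ThetaX φ)

/-- The ideal `df(Θ_X^T)`. -/
def dThetaT (f φ : O n) : Ideal (O n) := Submodule.map (evalD f) (ThetaXT φ)

/-- The Bruce–Roberts number `μ_BR(f, X) = dim_ℂ 𝒪ₙ/df(Θ_X)`. -/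
def muBR (f φ : O n) : ℕ := finrank ℂ (O n ⧸ dTheta f φ)

/-- The Tjurina number `τ(X,0) = dim_ℂ 𝒪ₙ/(⟨φ⟩ + Jφ)`. -/
def tjurina (φ : O n) : ℕ := finrank ℂ (O n ⧸ (Ideal.span {φ} ⊔ J φ))

/-- The quotient `A/B` of two ideals of `𝒪ₙ` (with `B ⊆ A` in applications),
as a `ℂ`-vector space. -/
abbrev idealQuot (A B : Ideal (O n)) :=
  (A.restrictScalars ℂ) ⧸
    (Submodule.comap (A.restrictScalars ℂ).subtype (B.restrictScalars ℂ))

/-- The quotient `N/P` of two submodules of `𝒪ₙⁿ` (with `P ⊆ N` in applications),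
as a `ℂ`-vector space. -/
abbrev submodQuot (N P : Submodule (O n) (Fin n → O n)) :=
  (N.restrictScalars ℂ) ⧸
    (Submodule.comap (N.restrictScalars ℂ).subtype (P.restrictScalars ℂ))



section Aux

variable {n : ℕ}

lemma evalD_apply (f : O n) (ξ : Fin n → O n) : evalD f ξ = ∑ i, ξ i * pd i f := rfl

lemma evalD_single (f : O n) (i : Fin n) (a : O n) :
    evalD f (Pi.single i a) = a * pd i f := by
  rw [evalD_apply, Finset.sum_eq_single i]
  · rw [Pi.single_eq_same]
  · intro b _ hb
    rw [Pi.single_eq_of_ne hb, zero_mul]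
  · intro h
    exact absurd (Finset.mem_univ i) h

/-- The explicit ideal `⟨φ ∂f/∂x₁, …, φ ∂f/∂xₙ⟩ + J(f,φ)` is contained in `df(Θ_X)`. -/
lemma explicit_le_dTheta (f φ : O n) :
    Ideal.span (Set.range fun i => φ * pd i f) ⊔ Jpair f φ ≤ dTheta f φ := by
  apply sup_le
  · rw [Ideal.span_le]
    rintro x ⟨i, rfl⟩
    refine ⟨Pi.single i φ, ?_, evalD_single f i φ⟩
    show evalD φ (Pi.single i φ) ∈ Ideal.span {φ}
    rw [evalD_single]
    exact Ideal.mem_span_singleton.2 ⟨pd i φ, rfl⟩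
  · rw [Jpair, Ideal.span_le]
    rintro x ⟨i, j, rfl⟩
    refine ⟨Pi.single i (pd j φ) - Pi.single j (pd i φ), ?_, ?_⟩
    · show evalD φ _ ∈ Ideal.span {φ}
      rw [map_sub, evalD_single, evalD_single]
      have : pd j φ * pd i φ - pd i φ * pd j φ = 0 := by ring
      rw [this]
      exact zero_mem _
    · rw [map_sub, evalD_single, evalD_single]
      ring

/-- The key algebraic identity: `Jφ · df(Θ_X) ⊆ ⟨φ ∂f/∂xᵢ⟩ + J(f,φ)`. -/
lemma pd_mul_mem_explicit (f φ : O n) {x : O n} (hx : x ∈ dTheta f φ) (j : Fin n) :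
    pd j φ * x ∈ Ideal.span (Set.range fun i => φ * pd i f) ⊔ Jpair f φ := by
  obtain ⟨ξ, hξ, rfl⟩ := hx
  have hξ' : evalD φ ξ ∈ Ideal.span {φ} := hξ
  obtain ⟨c, hc⟩ := Ideal.mem_span_singleton'.1 hξ'
  have h1 : pd j φ * evalD f ξ
      = (∑ i, ξ i * (pd i f * pd j φ - pd j f * pd i φ)) + pd j f * evalD φ ξ := by
    rw [evalD_apply, evalD_apply, Finset.mul_sum, Finset.mul_sum, ← Finset.sum_add_distrib]
    exact Finset.sum_congr rfl fun i _ => by ring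
  rw [h1, ← hc]
  apply add_mem
  · apply Submodule.sum_mem
    intro i _
    exact Submodule.mem_sup_right
      (Ideal.mul_mem_left _ _ (Ideal.subset_span ⟨i, j, rfl⟩))
  · have h2 : pd j f * (c * φ) = c * (φ * pd j f) := by ring
    rw [h2]
    exact Submodule.mem_sup_left
      (Ideal.mul_mem_left _ _ (Ideal.subset_span ⟨j, rfl⟩))

/-- Finite dimensionality passes to quotients by larger ideals. -/
lemma fd_of_ideal_le {A B : Ideal (O n)} (h : A ≤ B)
    (hA : FiniteDimensional ℂ (O n ⧸ A)) : FiniteDimensional ℂ (O n ⧸ B) := by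
  haveI := hA
  apply Module.Finite.of_surjective
    ((Submodule.mapQ A B LinearMap.id h).restrictScalars ℂ)
  intro y
  obtain ⟨x, rfl⟩ := Submodule.mkQ_surjective B y
  refine ⟨A.mkQ x, ?_⟩
  rw [Submodule.mkQ_apply, LinearMap.restrictScalars_apply, Submodule.mapQ_apply,
    LinearMap.id_apply]
  rfl

/-- Extension of finite-dimensional by finite-dimensional is finite-dimensional. -/
lemma fd_of_submodule_quotient {M : Type*} [AddCommGroup M] [Module ℂ M]
    (S : Submodule ℂ M) (h1 : FiniteDimensional ℂ S)
    (h2 : FiniteDimensional ℂ (M ⧸ S)) : FiniteDimensional ℂ M := by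
  rw [FiniteDimensional, Module.finite_def]
  apply Submodule.fg_of_fg_map_of_fg_inf_ker S.mkQ
  · rw [Submodule.map_top, Submodule.range_mkQ]
    exact Module.finite_def.1 h2
  · rw [Submodule.ker_mkQ, top_inf_eq]
    exact (Submodule.fg_iff_finiteDimensional S).2 h1

end Aux

/-- Lemma 2.3: for an isolated hypersurface singularity `X = φ⁻¹(0)`,
`μ_BR(f,X) = dim_ℂ 𝒪ₙ/df(Θ_X)` is finite iff `dim_ℂ 𝒪ₙ/df(Θ_X^T)` is finite, where
`df(Θ_X^T) = ⟨φ ∂f/∂x₁, …, φ ∂f/∂xₙ⟩ + J(f,φ)`. -/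
theorem stmt_1 {n : ℕ} (φ f : O n) (hφ0 : value φ = 0)
    (hμφ : FiniteDimensional ℂ (O n ⧸ J φ)) :
    FiniteDimensional ℂ (O n ⧸ dTheta f φ) ↔
      FiniteDimensional ℂ
        (O n ⧸ (Ideal.span (Set.range fun i => φ * pd i f) ⊔ Jpair f φ)) := by
  set I : Ideal (O n) := Ideal.span (Set.range fun i => φ * pd i f) ⊔ Jpair f φ with hI
  constructor
  · intro h
    haveI := h
    -- for each `i`, multiplication by `∂ᵢφ` induces a map `𝒪/dTheta → 𝒪/I`
    set L : Fin n → (O n →ₗ[O n] O n ⧸ I) :=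
      fun i => I.mkQ ∘ₗ LinearMap.lsmul (O n) (O n) (pd i φ) with hL
    have hker : ∀ i, dTheta f φ ≤ LinearMap.ker (L i) := by
      intro i x hx
      have : pd i φ * x ∈ I := pd_mul_mem_explicit f φ hx i
      simp only [hL, LinearMap.mem_ker, LinearMap.comp_apply, LinearMap.lsmul_apply,
        Submodule.mkQ_apply, Submodule.Quotient.mk_eq_zero, smul_eq_mul]
      exact this
    set ψ : Fin n → (O n ⧸ dTheta f φ →ₗ[O n] O n ⧸ I) :=
      fun i => Submodule.liftQ _ (L i) (hker i) with hψ
    set Ltot : (Fin n → O n ⧸ dTheta f φ) →ₗ[O n] O n ⧸ I :=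
      ∑ i, (ψ i) ∘ₗ LinearMap.proj i with hLtot
    set S : Submodule ℂ (O n ⧸ I) := LinearMap.range (Ltot.restrictScalars ℂ) with hS
    have hSfd : FiniteDimensional ℂ S := inferInstance
    -- the quotient `(𝒪/I)/S` is a quotient of `𝒪/Jφ`
    have hgker : (J φ).restrictScalars ℂ ≤
        LinearMap.ker (S.mkQ ∘ₗ (I.mkQ.restrictScalars ℂ)) := by
      intro x hx
      have hx' : x ∈ Submodule.span (O n) (Set.range fun i => pd i φ) := hx
      obtain ⟨c, hc⟩ := Submodule.mem_span_range_iff_exists_fun (O n) |>.1 hx'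
      simp only [LinearMap.mem_ker, LinearMap.comp_apply, LinearMap.restrictScalars_apply,
        Submodule.mkQ_apply, Submodule.Quotient.mk_eq_zero]
      refine ⟨fun i => Submodule.Quotient.mk (c i), ?_⟩
      have : Ltot (fun i => Submodule.Quotient.mk (c i))
          = Submodule.Quotient.mk (∑ i, pd i φ • c i) := by
        simp only [hLtot, LinearMap.sum_apply, LinearMap.comp_apply, LinearMap.proj_apply,
          hψ, Submodule.liftQ_apply, hL, LinearMap.lsmul_apply, Submodule.mkQ_apply]
        exact (map_sum I.mkQ (fun i => pd i φ • c i) Finset.univ).symm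
      rw [LinearMap.restrictScalars_apply, this]
      congr 1
      rw [← hc]
      exact Finset.sum_congr rfl fun i _ => by
        simp only [smul_eq_mul]; ring
    have hg : Function.Surjective
        (Submodule.liftQ ((J φ).restrictScalars ℂ) _ hgker) := by
      intro y
      obtain ⟨z, rfl⟩ := Submodule.mkQ_surjective S y
      obtain ⟨x, rfl⟩ := Submodule.mkQ_surjective I z
      exact ⟨Submodule.Quotient.mk x, rfl⟩
    haveI hJfd : FiniteDimensional ℂ (O n ⧸ (J φ).restrictScalars ℂ) :=
      Module.Finite.equiv (Submodule.Quotient.restrictScalarsEquiv ℂ (J φ)).symm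
    have hQfd : FiniteDimensional ℂ ((O n ⧸ I) ⧸ S) :=
      Module.Finite.of_surjective _ hg
    exact fd_of_submodule_quotient S hSfd hQfd
  · intro h
    exact fd_of_ideal_le (explicit_le_dTheta f φ) h

end BR

end
end

section
/- Let φ ∈ 𝒪ₙ with φ(0) = 0 and μ(φ) < ∞, X = φ⁻¹(0), and let p(x) = a₁x₁ + ⋯ + aₙxₙ be a linear function with a₁ ≠ 0. Then {g ∈ 𝒪ₙ : g·(∂φ/∂x₁) ∈ ⟨φ⟩ + J(p,φ)} = dp(Θ_X), i.e. a germ g satisfies g·(∂φ/∂x₁) ∈ ⟨φ⟩ + J(p,φ) if and only if g = Σᵢ aᵢξᵢ for some ξ = (ξ₁,…,ξₙ) ∈ Θ_X. -/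
/-!
For a vector field `ξ`, write `dφ(ξ) = ∑ ξᵢ ∂ᵢφ` and `dp(ξ) = ∑ aᵢ ξᵢ`. The identity
`dp(ξ) ∂₁φ = a₁ dφ(ξ) + ∑ ξᵢ (aᵢ ∂₁φ - a₁ ∂ᵢφ)` shows that `g = dp(ξ)` with `ξ ∈ Θ_X` satisfies
`g ∂₁φ ∈ ⟨φ⟩ + J(p,φ)`. Conversely, every generator `aᵢ ∂ⱼφ - aⱼ ∂ᵢφ` of `J(p,φ)` is `dφ(ζ)` for
`ζ = aᵢ eⱼ - aⱼ eᵢ`, which has `dp(ζ) = 0`; so `g ∂₁φ = hφ + dφ(ζ)` with `dp(ζ) = 0`, and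
`ξ = a₁⁻¹ (g e₁ - ζ)` is tangent to `X` with `dp(ξ) = g`.
-/

set_option maxHeartbeats 1000000
set_option synthInstance.maxHeartbeats 400000

open Filter Topology Module

noncomputable section

namespace BR

variable {α : Type*} (l : Filter α)

variable {n : ℕ}

/-- For a linear function `p(x) = a₁x₁ + ⋯ + aₙxₙ`, the evaluation
`ξ ↦ dp(ξ) = ∑ᵢ aᵢ ξᵢ` on vector fields, as an `𝒪ₙ`-linear map. -/
def evalL (a : Fin n → ℂ) : (Fin n → O n) →ₗ[O n] O n where
  toFun ξ := ∑ i, algebraMap ℂ (O n) (a i) * ξ i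
  map_add' ξ η := by simp [mul_add, Finset.sum_add_distrib]
  map_smul' c ξ := by simp [Finset.mul_sum, mul_left_comm]

/-- The ideal `J(p,φ)` generated by `aᵢ ∂φ/∂xⱼ − aⱼ ∂φ/∂xᵢ`, i.e. by the `2×2`
minors of the Jacobian matrix of `(p,φ)` for the linear function `p(x) = ∑ aᵢxᵢ`. -/
def Jlin (a : Fin n → ℂ) (φ : O n) : Ideal (O n) :=
  Ideal.span {h | ∃ i j : Fin n,
    h = algebraMap ℂ (O n) (a i) * pd j φ - algebraMap ℂ (O n) (a j) * pd i φ}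

section Minors

variable {R ι : Type*} [CommRing R] [Fintype ι]

open Fintype (linearCombination)

theorem linearCombination_mul_eq (a d ξ : ι → R) (k : ι) :
    linearCombination R a ξ * d k =
      a k * linearCombination R d ξ + ∑ i, ξ i * (a i * d k - a k * d i) := by
  simp only [Fintype.linearCombination_apply, smul_eq_mul, Finset.sum_mul, Finset.mul_sum,
    ← Finset.sum_add_distrib]
  exact Finset.sum_congr rfl fun i _ => by ring

theorem span_minors_le_map_ker [DecidableEq ι] (a d : ι → R) :
    Ideal.span {h | ∃ i j, h = a i * d j - a j * d i} ≤
      (LinearMap.ker (linearCombination R a)).map (linearCombination R d) := by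
  rw [Ideal.span_le]
  rintro _ ⟨i, j, rfl⟩
  refine ⟨Pi.single j (a i) - Pi.single i (a j), ?_, ?_⟩
  · simp [mul_comm]
  · simp

theorem mul_mem_sup_span_minors_iff [DecidableEq ι] (I : Ideal R) (a d : ι → R) {k : ι}
    (hk : IsUnit (a k)) (g : R) :
    g * d k ∈ I ⊔ Ideal.span {h | ∃ i j, h = a i * d j - a j * d i} ↔
      g ∈ (Submodule.comap (linearCombination R d) I).map (linearCombination R a) := by
  constructor
  · intro hg
    obtain ⟨y, hy, _, ⟨ζ, hζ, rfl⟩, hsum⟩ :=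
      Submodule.mem_sup.mp (sup_le_sup_left (span_minors_le_map_ker a d) I hg)
    obtain ⟨u, hu⟩ := hk.exists_left_inv
    refine ⟨u • (Pi.single k g - ζ), ?_, ?_⟩
    · have : linearCombination R d (u • (Pi.single k g - ζ)) = u * y := by
        simp [← hsum]
      simpa [Submodule.mem_comap, this] using I.mul_mem_left u hy
    · rw [map_smul, map_sub, Fintype.linearCombination_apply_single, LinearMap.mem_ker.mp hζ,
        sub_zero, smul_eq_mul, smul_eq_mul, mul_comm g, ← mul_assoc, hu, one_mul]
  · rintro ⟨ξ, hξ, rfl⟩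
    rw [linearCombination_mul_eq]
    exact Submodule.add_mem_sup (I.mul_mem_left _ hξ) (Ideal.sum_mem _ fun i _ =>
      Ideal.mul_mem_left _ _ (Ideal.subset_span ⟨i, k, rfl⟩))

end Minors

theorem evalL_eq_linearCombination (a : Fin n → ℂ) :
    evalL a = Fintype.linearCombination (O n) (fun i => algebraMap ℂ (O n) (a i)) := by
  ext ξ
  simp [evalL, Fintype.linearCombination_apply, mul_comm]

theorem evalD_eq_linearCombination (φ : O n) :
    evalD φ = Fintype.linearCombination (O n) (fun i => pd i φ) := rfl

theorem stmt_6_general {n : ℕ} (hn : 0 < n) (φ : O n)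
    (a : Fin n → ℂ) (ha : a ⟨0, hn⟩ ≠ 0) (g : O n) :
    g * pd ⟨0, hn⟩ φ ∈ Ideal.span {φ} ⊔ Jlin a φ ↔
      g ∈ Submodule.map (evalL a) (ThetaX φ) := by
  have hu : IsUnit (algebraMap ℂ (O n) (a ⟨0, hn⟩)) := ha.isUnit.map _
  rw [ThetaX, evalL_eq_linearCombination, evalD_eq_linearCombination]
  exact mul_mem_sup_span_minors_iff (Ideal.span {φ}) _ (fun i => pd i φ) hu g

/-- claim in the proof of Theorem 3.3: for a linear function
`p(x) = ∑ aᵢxᵢ` with `a₁ ≠ 0`, a germ `g` satisfies `g ∂φ/∂x₁ ∈ ⟨φ⟩ + J(p,φ)` iff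
`g ∈ dp(Θ_X)`, i.e. `g = ∑ᵢ aᵢξᵢ` for some `ξ ∈ Θ_X`. -/
theorem stmt_6 {n : ℕ} (hn : 0 < n) (φ : O n) (hφ0 : value φ = 0)
    (hμφ : FiniteDimensional ℂ (O n ⧸ J φ))
    (a : Fin n → ℂ) (ha : a ⟨0, hn⟩ ≠ 0) (g : O n) :
    g * pd ⟨0, hn⟩ φ ∈ Ideal.span {φ} ⊔ Jlin a φ ↔
      g ∈ Submodule.map (evalL a) (ThetaX φ) :=
  stmt_6_general hn φ a ha g

end BR

end
end
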